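/- arXiv:2505.07649 — 2 statements merged into one kernel-verified Lean document; each statement's English description precedes it below -/
import Mathlib

section
/- Let k and n be integers with k/2 − 1 < n ≤ k − 3 (so k ≥ 5). Then: (i) the mixing density h(v) = (v+1)^{k/2−2−n} satisfies ∫₀^∞ h(v) dv < ∞, so the corresponding variance-mixture-of-normals prior on ℝ^k is proper; and (ii) the function m : ℝ^k → ℝ defined by m(x) = ∫₀^∞ (v+1)^{−2−n} · exp(−‖x‖²/(2(1+v))) dv is positive, and satisfies Δ√(m)(x) ≤ 0 for every x ∈ ℝ^k with x ≠ 0. -/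
/-!
Substituting `u = 1/(1+v)` turns `m` into the radial function `m x = I_n(‖x‖²/2)`, where
`I_n(t) = ∫₀¹ uⁿ e^{-tu} du`. For a radial function `f(‖x‖²/2)` on `ℝᵏ` the Laplacian is
`k f'(t) + 2t f''(t)`, and for `f = √I_n` (using `I_n' = -I_{n+1}`) this has the sign of
`t (2 I_n I_{n+2} - I_{n+1}²) - k I_n I_{n+1}`. Integration by parts gives
`t I_{n+1} = (n+1) I_n - e^{-t}`, which turns the first term into
`(n+3) I_n I_{n+1} + e^{-t} (I_{n+1} - 2 I_n) ≤ (n+3) I_n I_{n+1}`, so `k ≥ n + 3` suffices.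
-/

open Real MeasureTheory

/-- The Laplacian of `f : ℝ^k → ℝ` at `x`: the sum of second partial derivatives
in the standard orthonormal coordinate directions. -/
noncomputable def laplacian {k : ℕ} (f : EuclideanSpace ℝ (Fin k) → ℝ)
    (x : EuclideanSpace ℝ (Fin k)) : ℝ :=
  ∑ i : Fin k,
    fderiv ℝ (fun y => fderiv ℝ f y (EuclideanSpace.single i 1)) x (EuclideanSpace.single i 1)

open Set ProbabilityTheory

theorem integrableOn_Ioi_add_one_rpow {p : ℝ} (hp : p < -1) :
    IntegrableOn (fun v : ℝ => (v + 1) ^ p) (Ioi 0) := by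
  have h := (measurePreserving_add_right volume (1 : ℝ)).integrableOn_image
    (measurableEmbedding_addRight 1) (f := fun v => v ^ p) (s := Ioi 0)
  rw [image_add_const_Ioi, zero_add] at h
  exact h.1 (integrableOn_Ioi_rpow_of_lt hp one_pos)

theorem hasFDerivAt_half_norm_sq {E : Type*} [NormedAddCommGroup E] [InnerProductSpace ℝ E]
    (x : E) : HasFDerivAt (fun y : E => ‖y‖ ^ 2 / 2) (innerSL ℝ x) x := by
  have h := ((hasStrictFDerivAt_norm_sq x).hasFDerivAt).mul_const (1 / 2 : ℝ)
  rwa [← Nat.cast_smul_eq_nsmul ℝ, smul_smul, Nat.cast_ofNat, one_div_mul_cancel two_ne_zero,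
    one_smul, funext fun y => mul_one_div (‖y‖ ^ 2) 2] at h

theorem HasDerivAt.hasFDerivAt_comp_half_norm_sq {E : Type*} [NormedAddCommGroup E]
    [InnerProductSpace ℝ E] {f : ℝ → ℝ} {f' : ℝ} {x : E} (hf : HasDerivAt f f' (‖x‖ ^ 2 / 2)) :
    HasFDerivAt (fun y => f (‖y‖ ^ 2 / 2)) (f' • innerSL ℝ x) x :=
  hf.comp_hasFDerivAt x (hasFDerivAt_half_norm_sq x)

theorem laplacian_comp_half_norm_sq {k : ℕ} {f f' : ℝ → ℝ} {f'' : ℝ}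
    (x : EuclideanSpace ℝ (Fin k)) (hf : ∀ t, HasDerivAt f (f' t) t)
    (hf' : HasDerivAt f' f'' (‖x‖ ^ 2 / 2)) :
    laplacian (fun y => f (‖y‖ ^ 2 / 2)) x = k * f' (‖x‖ ^ 2 / 2) + ‖x‖ ^ 2 * f'' := by
  have first_partial (i : Fin k) : (fun y : EuclideanSpace ℝ (Fin k) =>
      fderiv ℝ (fun y => f (‖y‖ ^ 2 / 2)) y (EuclideanSpace.single i 1)) =
      fun y => f' (‖y‖ ^ 2 / 2) * y i := by
    ext y
    simp [(hf _).hasFDerivAt_comp_half_norm_sq.fderiv, EuclideanSpace.inner_single_right]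
  have second_partial (i : Fin k) : fderiv ℝ (fun y : EuclideanSpace ℝ (Fin k) =>
      f' (‖y‖ ^ 2 / 2) * y i) x (EuclideanSpace.single i 1) = f' (‖x‖ ^ 2 / 2) + f'' * x i ^ 2 := by
    have h : HasFDerivAt (fun y : EuclideanSpace ℝ (Fin k) => f' (‖y‖ ^ 2 / 2) * y i) _ x :=
      hf'.hasFDerivAt_comp_half_norm_sq.mul (EuclideanSpace.proj (𝕜 := ℝ) i).hasFDerivAt
    rw [h.fderiv]
    simp [EuclideanSpace.inner_single_right]
    ring
  simp_rw [laplacian, first_partial, second_partial, Finset.sum_add_distrib, ← Finset.mul_sum,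
    EuclideanSpace.real_norm_sq_eq]
  simp [mul_comm]

theorem HasDerivAt.div_two_mul_sqrt {F F' : ℝ → ℝ} {F'' t : ℝ} (hF : HasDerivAt F (F' t) t)
    (hF' : HasDerivAt F' F'' t) (hpos : 0 < F t) :
    HasDerivAt (fun s => F' s / (2 * √(F s)))
      ((2 * F t * F'' - F' t ^ 2) / (4 * F t * √(F t))) t := by
  have hsqrt := Real.sqrt_pos.2 hpos
  refine (hF'.div ((hF.sqrt hpos.ne').const_mul 2) (by positivity)).congr_deriv ?_
  field_simp
  rw [sq_sqrt hpos.le]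
  ring

theorem integrableExpSet_id_restrict_Ioc (a b : ℝ) :
    integrableExpSet id (volume.restrict (Ioc a b)) = univ :=
  eq_univ_of_forall fun _ =>
    (continuous_exp.comp (continuous_const.mul continuous_id)).integrableOn_Ioc

noncomputable def truncLaplacePow (n : ℕ) (t : ℝ) : ℝ :=
  ∫ u in (0 : ℝ)..1, u ^ n * exp (-t * u)

section truncLaplacePow

variable (n : ℕ) (t : ℝ)

theorem intervalIntegrable_pow_mul_exp (a b : ℝ) :
    IntervalIntegrable (fun u : ℝ => u ^ n * exp (-t * u)) volume a b := by
  apply Continuous.intervalIntegrable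
  fun_prop

theorem truncLaplacePow_pos : 0 < truncLaplacePow n t :=
  intervalIntegral.intervalIntegral_pos_of_pos_on (intervalIntegrable_pow_mul_exp n t 0 1)
    (fun _ hu => mul_pos (pow_pos hu.1 n) (exp_pos _)) one_pos

theorem truncLaplacePow_succ_le : truncLaplacePow (n + 1) t ≤ truncLaplacePow n t :=
  intervalIntegral.integral_mono_on zero_le_one (intervalIntegrable_pow_mul_exp _ t 0 1)
    (intervalIntegrable_pow_mul_exp n t 0 1) fun _ hu =>
      mul_le_mul_of_nonneg_right (pow_le_pow_of_le_one hu.1 hu.2 n.le_succ) (exp_pos _).le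

theorem mul_truncLaplacePow_succ :
    t * truncLaplacePow (n + 1) t = (n + 1) * truncLaplacePow n t - exp (-t) := by
  have parts := intervalIntegral.integral_mul_deriv_eq_deriv_mul (a := 0) (b := 1)
    (u := fun u : ℝ => u ^ (n + 1)) (v := fun u => exp (-t * u))
    (u' := fun u => (n + 1) * u ^ n) (v' := fun u => -t * exp (-t * u))
    (fun u _ => by simpa using hasDerivAt_pow (n + 1) u)
    (fun u _ => by simpa [mul_comm] using ((hasDerivAt_id u).const_mul (-t)).exp)
    (by apply Continuous.intervalIntegrable; fun_prop)
    (by apply Continuous.intervalIntegrable; fun_prop)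
  simp only [mul_left_comm _ (-t), mul_assoc, intervalIntegral.integral_const_mul] at parts
  norm_num at parts
  simp only [truncLaplacePow, neg_mul]
  linarith

theorem truncLaplacePow_eq_setIntegral :
    truncLaplacePow n = fun t => ∫ u in Ioc 0 1, u ^ n * exp (-t * u) := by
  ext t
  rw [truncLaplacePow, intervalIntegral.integral_of_le zero_le_one]

theorem hasDerivAt_truncLaplacePow :
    HasDerivAt (truncLaplacePow n) (-truncLaplacePow (n + 1) t) t := by
  have h := hasDerivAt_integral_pow_mul_exp_real (X := id) (μ := volume.restrict (Ioc 0 1))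
    (t := -t) (by simp [integrableExpSet_id_restrict_Ioc]) n
  rw [truncLaplacePow_eq_setIntegral, truncLaplacePow_eq_setIntegral]
  exact h.scomp t (hasDerivAt_neg t) |>.congr_deriv (by simp)

theorem truncLaplacePow_turan_le :
    t * (2 * truncLaplacePow n t * truncLaplacePow (n + 2) t - truncLaplacePow (n + 1) t ^ 2) ≤
      (n + 3) * truncLaplacePow n t * truncLaplacePow (n + 1) t := by
  have hB := mul_truncLaplacePow_succ n t
  have hC := mul_truncLaplacePow_succ (n + 1) t
  push_cast at hC
  have hA := truncLaplacePow_pos n t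
  have hBA := truncLaplacePow_succ_le n t
  nlinarith [exp_pos (-t)]

end truncLaplacePow

theorem image_inv_sub_one_Ioo : (fun u : ℝ => u⁻¹ - 1) '' Ioo 0 1 = Ioi 0 := by
  ext v
  constructor
  · rintro ⟨u, ⟨hu0, hu1⟩, rfl⟩
    simpa using (one_lt_inv₀ hu0).2 hu1
  · intro (hv : 0 < v)
    exact ⟨(v + 1)⁻¹, ⟨by positivity, inv_lt_one_of_one_lt₀ (by linarith)⟩, by simp⟩

theorem setIntegral_Ioi_add_one_rpow_mul_comp_inv (p : ℝ) (f : ℝ → ℝ) :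
    ∫ v in Ioi 0, (v + 1) ^ (-2 - p) * f (v + 1)⁻¹ = ∫ u in Ioo 0 1, u ^ p * f u := by
  rw [← image_inv_sub_one_Ioo, integral_image_eq_integral_abs_deriv_smul measurableSet_Ioo
    (fun u hu => ((hasDerivAt_inv hu.1.ne').sub_const 1).hasDerivWithinAt)
    (fun a _ b _ hab => inv_injective (sub_left_injective hab))]
  refine setIntegral_congr_fun measurableSet_Ioo fun u hu => ?_
  have hu0 : 0 < u := hu.1
  simp only [sub_add_cancel, inv_inv, smul_eq_mul, abs_neg, abs_inv, abs_pow, abs_of_pos hu0]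
  rw [inv_rpow hu0.le, ← rpow_neg hu0.le, neg_sub, sub_neg_eq_add, rpow_add hu0, rpow_two]
  field_simp

theorem setIntegral_Ioi_eq_truncLaplacePow (n : ℕ) (s : ℝ) :
    ∫ v in Ioi 0, (v + 1) ^ (-(2 : ℝ) - n) * exp (-s / (2 * (1 + v))) =
      truncLaplacePow n (s / 2) := by
  have h := setIntegral_Ioi_add_one_rpow_mul_comp_inv n fun u => exp (-(s / 2) * u)
  simp only [rpow_natCast] at h
  rw [truncLaplacePow, intervalIntegral.integral_of_le zero_le_one, integral_Ioc_eq_integral_Ioo,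
    ← h]
  congr! 4 with v
  field_simp
  ring

theorem sqrt_truncLaplacePow_radial_le_zero {k n : ℕ} (hk : n + 3 ≤ k) (t : ℝ) :
    k * (-truncLaplacePow (n + 1) t / (2 * √(truncLaplacePow n t))) +
      2 * t * ((2 * truncLaplacePow n t * truncLaplacePow (n + 2) t -
        (-truncLaplacePow (n + 1) t) ^ 2) / (4 * truncLaplacePow n t * √(truncLaplacePow n t)))
      ≤ 0 := by
  set A := truncLaplacePow n t
  set B := truncLaplacePow (n + 1) t
  set C := truncLaplacePow (n + 2) t
  have hA : 0 < A := truncLaplacePow_pos n t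
  have hB : 0 < B := truncLaplacePow_pos (n + 1) t
  have hsqrt : 0 < √A := Real.sqrt_pos.2 hA
  have hk' : (n : ℝ) + 3 ≤ k := by exact_mod_cast hk
  have combine : k * (-B / (2 * √A)) + 2 * t * ((2 * A * C - (-B) ^ 2) / (4 * A * √A)) =
      (2 * (t * (2 * A * C - B ^ 2)) - 2 * k * A * B) / (4 * A * √A) := by
    field_simp
    ring
  rw [combine]
  refine div_nonpos_of_nonpos_of_nonneg ?_ (by positivity)
  nlinarith [truncLaplacePow_turan_le n t, mul_le_mul_of_nonneg_right hk' (mul_pos hA hB).le]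

theorem stmt16 (k n : ℕ) (hlow : (k : ℝ) / 2 - 1 < n) (hhigh : n + 3 ≤ k)
    (h : ℝ → ℝ) (hdef : ∀ v : ℝ, h v = (v + 1) ^ ((k : ℝ) / 2 - 2 - n))
    (m : EuclideanSpace ℝ (Fin k) → ℝ)
    (hm : ∀ x, m x = ∫ v in Set.Ioi (0 : ℝ),
      (v + 1) ^ (-(2 : ℝ) - n) * Real.exp (-‖x‖ ^ 2 / (2 * (1 + v)))) :
    IntegrableOn h (Set.Ioi (0 : ℝ)) ∧
    (∀ x : EuclideanSpace ℝ (Fin k), 0 < m x) ∧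
    (∀ x : EuclideanSpace ℝ (Fin k), x ≠ 0 →
      laplacian (fun y => Real.sqrt (m y)) x ≤ 0) := by
  obtain rfl : m = fun x => truncLaplacePow n (‖x‖ ^ 2 / 2) :=
    funext fun x => by rw [hm, setIntegral_Ioi_eq_truncLaplacePow]
  obtain rfl : h = fun v => (v + 1) ^ ((k : ℝ) / 2 - 2 - n) := funext hdef
  refine ⟨integrableOn_Ioi_add_one_rpow (by linarith), fun x => truncLaplacePow_pos n _,
    fun x _ => ?_⟩
  set t := ‖x‖ ^ 2 / 2
  have hg (s : ℝ) := (hasDerivAt_truncLaplacePow n s).sqrt (truncLaplacePow_pos n s).ne'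
  have hg' : HasDerivAt (fun s => -truncLaplacePow (n + 1) s / (2 * √(truncLaplacePow n s)))
      ((2 * truncLaplacePow n t * truncLaplacePow (n + 2) t - (-truncLaplacePow (n + 1) t) ^ 2) /
        (4 * truncLaplacePow n t * √(truncLaplacePow n t))) t :=
    (hasDerivAt_truncLaplacePow n t).div_two_mul_sqrt
      ((hasDerivAt_truncLaplacePow (n + 1) t).fun_neg.congr_deriv (neg_neg _))
      (truncLaplacePow_pos n t)
  calc laplacian (fun y => √(truncLaplacePow n (‖y‖ ^ 2 / 2))) x
      = k * (-truncLaplacePow (n + 1) t / (2 * √(truncLaplacePow n t))) + 2 * t * _ := by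
        rw [laplacian_comp_half_norm_sq x hg hg']
        ring
    _ ≤ 0 := sqrt_truncLaplacePow_radial_le_zero hhigh t
end

section
/- (Example 2, Case 1.) Let α > 0, β > 1, 0 < σ < 1 and γ < 0, and define G(s) = ∫₀^1 t^{α−1}(1−t)^{β−1}(1−σt)^{−γ} e^{−st} dt for s > 0. Then G is twice differentiable with G(s) > 0 and G′(s) < 0 on (0,∞), and for every s > 0: s · ( G′(s)/G(s) − 2·G″(s)/G′(s) ) ≤ α + 2. In particular, if α + 2 ≤ k then G′(s)/G(s) − 2G″(s)/G′(s) ≤ k/s for all s > 0. -/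
/-!
Write `Mⱼ(s) = ∫₀¹ tʲ u(t) e^{-st} dt` with `u(t) = t^{α-1} w(t)` and
`w(t) = (1-t)^{β-1}(1-σt)^{-γ}`. Differentiating under the integral, `G = M₀`, `G' = -M₁` and
`G'' = M₂`, so the claim is `s (2 M₂ M₀ - M₁²) ≤ (α + 2) M₀ M₁`.

Integrating `d/dt (t^{α+j} w(t) e^{-st})` over `(0, 1)`, where the boundary terms vanish because
`α > 0` and `β > 1`, gives `s M_{j+1} = (α + j) Mⱼ - ∫ φ tʲ u e^{-st}` with
`φ = -t w'/w = t ((β-1)/(1-t) - γσ/(1-σt))`, which is nonnegative and increasing as `γ < 0 < σ`.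
Substituting, the claim becomes `(∫ φ dμ)(∫ t dμ) ≤ 2 (∫ t φ dμ)(∫ dμ)` for `dμ = u(t) e^{-st} dt`,
which follows by integrating the pointwise bound `φ(x) y ≤ x φ(x) + y φ(y)` in `x` and `y`.
-/

open Real MeasureTheory Set

theorem integrableOn_rpow_mul_one_sub_rpow {p q : ℝ} (hp : -1 < p) (hq : -1 < q) :
    IntegrableOn (fun t : ℝ => t ^ p * (1 - t) ^ q) (Ioo 0 1) := by
  have hβ := Complex.betaIntegral_convergent (u := p + 1) (v := q + 1)
    (by simp; linarith) (by simp; linarith)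
  rw [intervalIntegrable_iff_integrableOn_Ioo_of_le zero_le_one] at hβ
  refine IntegrableOn.congr_fun hβ.norm (fun t ht => ?_) measurableSet_Ioo
  rw [norm_mul, ← Complex.ofReal_one, ← Complex.ofReal_sub,
    Complex.norm_cpow_eq_rpow_re_of_pos ht.1, Complex.norm_cpow_eq_rpow_re_of_pos (sub_pos.2 ht.2)]
  simp

theorem integral_mul_integral_le_two_mul {μ : Measure ℝ} {S : Set ℝ} (hS : MeasurableSet S)
    (hS0 : S ⊆ Ici 0) {u φ : ℝ → ℝ} (hu : IntegrableOn u S μ)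
    (htu : IntegrableOn (fun t => t * u t) S μ) (hφu : IntegrableOn (fun t => φ t * u t) S μ)
    (hφtu : IntegrableOn (fun t => φ t * (t * u t)) S μ) (hu0 : ∀ t ∈ S, 0 ≤ u t)
    (hφ0 : ∀ t ∈ S, 0 ≤ φ t) (hφ : MonotoneOn φ S) :
    (∫ t in S, φ t * u t ∂μ) * (∫ t in S, t * u t ∂μ) ≤
      2 * ((∫ t in S, φ t * (t * u t) ∂μ) * ∫ t in S, u t ∂μ) := by
  set M0 := ∫ t in S, u t ∂μ
  set D := ∫ t in S, φ t * (t * u t) ∂μ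
  have pointwise : ∀ x ∈ S, ∀ y ∈ S,
      φ x * u x * (y * u y) ≤ φ x * (x * u x) * u y + u x * (φ y * (y * u y)) := by
    intro x hx y hy
    have hx0 : 0 ≤ x := hS0 hx
    have hy0 : 0 ≤ y := hS0 hy
    have hxy : φ x * y ≤ φ x * x + φ y * y := by
      rcases le_total x y with h | h
      · nlinarith [mul_le_mul_of_nonneg_right (hφ hx hy h) hy0, mul_nonneg (hφ0 x hx) hx0]
      · nlinarith [mul_le_mul_of_nonneg_left h (hφ0 x hx), mul_nonneg (hφ0 y hy) hy0]
    nlinarith [mul_le_mul_of_nonneg_right hxy (mul_nonneg (hu0 x hx) (hu0 y hy))]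
  have inner : ∀ x ∈ S, φ x * u x * ∫ t in S, t * u t ∂μ ≤
      φ x * (x * u x) * M0 + u x * D := by
    intro x hx
    rw [← integral_const_mul, ← integral_const_mul, ← integral_const_mul,
      ← integral_add (hu.const_mul _) (hφtu.const_mul _)]
    exact setIntegral_mono_on (htu.const_mul _) ((hu.const_mul _).add (hφtu.const_mul _)) hS
      (pointwise x hx)
  have outer := setIntegral_mono_on (hφu.mul_const _) ((hφtu.mul_const _).add (hu.mul_const _))
    hS inner
  simp only [Pi.add_apply] at outer
  rw [integral_add (hφtu.mul_const _) (hu.mul_const _), integral_mul_const, integral_mul_const,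
    integral_mul_const] at outer
  linarith

theorem one_sub_mul_pos_of_mem_Icc {σ t : ℝ} (hσ : σ < 1) (ht : t ∈ Icc (0 : ℝ) 1) :
    0 < 1 - σ * t := by
  rcases le_total σ 0 with h | h <;> nlinarith [ht.1, ht.2]

noncomputable def betaKernel (p q σ r s t : ℝ) : ℝ :=
  t ^ p * (1 - t) ^ q * (1 - σ * t) ^ r * exp (-s * t)

noncomputable def betaLaplace (p q σ r s : ℝ) : ℝ :=
  ∫ t in Ioo 0 1, betaKernel p q σ r s t

-- `-t w'(t) / w(t)` for the weight `w t = (1 - t) ^ q * (1 - σ * t) ^ r`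
noncomputable def betaDrift (q σ r t : ℝ) : ℝ :=
  t * (q / (1 - t) + r * σ / (1 - σ * t))

section

variable {p q σ r s t : ℝ}

theorem betaKernel_pos (hσ : σ < 1) (ht : t ∈ Ioo 0 1) : 0 < betaKernel p q σ r s t := by
  have := one_sub_mul_pos_of_mem_Icc hσ (Ioo_subset_Icc_self ht)
  have := sub_pos.2 ht.2
  have := ht.1
  unfold betaKernel
  positivity

theorem betaKernel_add_one (ht : 0 < t) :
    betaKernel (p + 1) q σ r s t = t * betaKernel p q σ r s t := by
  unfold betaKernel
  rw [rpow_add_one ht.ne']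
  ring

theorem integrableOn_betaKernel (hp : -1 < p) (hq : -1 < q) (hσ : σ < 1) :
    IntegrableOn (betaKernel p q σ r s) (Ioo 0 1) := by
  have hcont : ContinuousOn (fun t => (1 - σ * t) ^ r * exp (-s * t)) (Icc 0 1) := by
    intro t ht
    have := one_sub_mul_pos_of_mem_Icc hσ ht
    exact ((continuousAt_const.sub (continuousAt_const.mul continuousAt_id)).rpow_const
      (Or.inl this.ne')).mul (by fun_prop) |>.continuousWithinAt
  refine ((integrableOn_rpow_mul_one_sub_rpow hp hq).mul_continuousOn_of_subset hcont
    measurableSet_Ioo isCompact_Icc Ioo_subset_Icc_self).congr_fun (fun t _ => ?_)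
    measurableSet_Ioo
  simp only [betaKernel, mul_assoc]

theorem betaLaplace_pos (hp : -1 < p) (hq : -1 < q) (hσ : σ < 1) :
    0 < betaLaplace p q σ r s := by
  unfold betaLaplace
  rw [← integral_Ioc_eq_integral_Ioo, ← intervalIntegral.integral_of_le zero_le_one]
  refine intervalIntegral.intervalIntegral_pos_of_pos_on ?_ (fun t ht => betaKernel_pos hσ ht)
    zero_lt_one
  rw [intervalIntegrable_iff_integrableOn_Ioo_of_le zero_le_one]
  exact integrableOn_betaKernel hp hq hσ

theorem hasDerivAt_betaKernel_param (ht : 0 < t) :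
    HasDerivAt (fun s => betaKernel p q σ r s t) (-betaKernel (p + 1) q σ r s t) s := by
  have := ((hasDerivAt_neg s).mul_const t).exp.const_mul (t ^ p * (1 - t) ^ q * (1 - σ * t) ^ r)
  refine this.congr_deriv ?_
  rw [betaKernel_add_one ht]
  simp only [betaKernel]
  ring

theorem antitone_betaKernel_param (hσ : σ < 1) (ht : t ∈ Ioo 0 1) :
    Antitone fun s => betaKernel p q σ r s t := by
  intro x y hxy
  have := one_sub_mul_pos_of_mem_Icc hσ (Ioo_subset_Icc_self ht)
  have := sub_pos.2 ht.2
  have := ht.1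
  dsimp only [betaKernel]
  gcongr

theorem hasDerivAt_betaLaplace (hp : -1 < p) (hq : -1 < q) (hσ : σ < 1) :
    HasDerivAt (betaLaplace p q σ r) (-betaLaplace (p + 1) q σ r s) s := by
  have hbound : ∀ᵐ t ∂volume.restrict (Ioo 0 1), ∀ x ∈ Metric.ball s 1,
      ‖-betaKernel (p + 1) q σ r x t‖ ≤ betaKernel (p + 1) q σ r (s - 1) t := by
    refine ae_restrict_of_forall_mem measurableSet_Ioo fun t ht x hx => ?_
    rw [norm_neg, Real.norm_of_nonneg (betaKernel_pos hσ ht).le]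
    have hx : s - 1 < x := by linarith [(abs_lt.1 (Real.dist_eq x s ▸ Metric.mem_ball.1 hx)).1]
    exact antitone_betaKernel_param hσ ht hx.le
  have key := hasDerivAt_integral_of_dominated_loc_of_deriv_le (μ := volume.restrict (Ioo 0 1))
    (F := fun x t => betaKernel p q σ r x t) (F' := fun x t => -betaKernel (p + 1) q σ r x t)
    (Metric.ball_mem_nhds s one_pos)
    (Filter.Eventually.of_forall fun x => (integrableOn_betaKernel hp hq hσ).aestronglyMeasurable)
    (integrableOn_betaKernel hp hq hσ)
    (integrableOn_betaKernel (by linarith) hq hσ).neg.aestronglyMeasurable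
    hbound (integrableOn_betaKernel (by linarith) hq hσ)
    (ae_restrict_of_forall_mem measurableSet_Ioo fun t ht x _ => hasDerivAt_betaKernel_param ht.1)
  rw [integral_neg] at key
  exact key.2

theorem deriv_betaLaplace (hp : -1 < p) (hq : -1 < q) (hσ : σ < 1) :
    deriv (betaLaplace p q σ r) = fun s => -betaLaplace (p + 1) q σ r s :=
  funext fun _ => (hasDerivAt_betaLaplace hp hq hσ).deriv

theorem betaDrift_mul_betaKernel (hσ : σ < 1) (ht : t ∈ Ioo 0 1) :
    betaDrift q σ r t * betaKernel p q σ r s t =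
      q * betaKernel (p + 1) (q - 1) σ r s t + r * σ * betaKernel (p + 1) q σ (r - 1) s t := by
  have h1 : 0 < 1 - t := sub_pos.2 ht.2
  have hσt := one_sub_mul_pos_of_mem_Icc hσ (Ioo_subset_Icc_self ht)
  simp only [betaDrift, betaKernel, rpow_add_one ht.1.ne', rpow_sub_one h1.ne',
    rpow_sub_one hσt.ne']
  field_simp

theorem hasDerivAt_betaKernel (hσ : σ < 1) (ht : t ∈ Ioo 0 1) :
    HasDerivAt (betaKernel (p + 1) q σ r s)
      ((p + 1 - betaDrift q σ r t - s * t) * betaKernel p q σ r s t) t := by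
  have h1 : 0 < 1 - t := sub_pos.2 ht.2
  have hσt := one_sub_mul_pos_of_mem_Icc hσ (Ioo_subset_Icc_self ht)
  have H := ((((hasDerivAt_id t).rpow_const (p := p + 1) (Or.inl ht.1.ne')).mul
    (((hasDerivAt_id t).const_sub 1).rpow_const (p := q) (Or.inl h1.ne'))).mul
    ((((hasDerivAt_id t).const_mul σ).const_sub 1).rpow_const (p := r) (Or.inl hσt.ne'))).mul
    (((hasDerivAt_id t).const_mul (-s)).exp)
  refine H.congr_deriv ?_
  simp only [betaDrift, betaKernel, Pi.mul_apply, id, add_sub_cancel_right, rpow_add_one ht.1.ne',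
    rpow_sub_one h1.ne', rpow_sub_one hσt.ne']
  field_simp
  ring

theorem integrableOn_betaDrift_mul_betaKernel (hp : -1 < p) (hq : 0 < q) (hσ : σ < 1) :
    IntegrableOn (fun t => betaDrift q σ r t * betaKernel p q σ r s t) (Ioo 0 1) := by
  have h1 : IntegrableOn (betaKernel (p + 1) (q - 1) σ r s) (Ioo 0 1) :=
    integrableOn_betaKernel (by linarith) (by linarith) hσ
  have h2 : IntegrableOn (betaKernel (p + 1) q σ (r - 1) s) (Ioo 0 1) :=
    integrableOn_betaKernel (by linarith) (by linarith) hσ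
  exact IntegrableOn.congr_fun ((h1.const_mul q).add (h2.const_mul (r * σ)))
    (fun _ ht => (betaDrift_mul_betaKernel hσ ht).symm) measurableSet_Ioo

theorem continuousOn_betaKernel (hp : 0 ≤ p) (hq : 0 ≤ q) (hσ : σ < 1) :
    ContinuousOn (betaKernel p q σ r s) (Icc 0 1) := by
  intro t ht
  have hσt := one_sub_mul_pos_of_mem_Icc hσ ht
  refine ContinuousAt.continuousWithinAt ?_
  refine (((continuousAt_id.rpow_const (Or.inr hp)).mul
    ((continuousAt_const.sub continuousAt_id).rpow_const (Or.inr hq))).mul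
    ((continuousAt_const.sub (continuousAt_const.mul continuousAt_id)).rpow_const
      (Or.inl hσt.ne'))).mul (by fun_prop)

theorem betaLaplace_integration_by_parts (hp : -1 < p) (hq : 0 < q) (hσ : σ < 1) :
    s * betaLaplace (p + 1) q σ r s =
      (p + 1) * betaLaplace p q σ r s -
        ∫ t in Ioo 0 1, betaDrift q σ r t * betaKernel p q σ r s t := by
  have hk : IntegrableOn (betaKernel p q σ r s) (Ioo 0 1) :=
    integrableOn_betaKernel hp (by linarith) hσ
  have hk1 : IntegrableOn (betaKernel (p + 1) q σ r s) (Ioo 0 1) :=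
    integrableOn_betaKernel (by linarith) (by linarith) hσ
  have hφk := integrableOn_betaDrift_mul_betaKernel (r := r) (s := s) hp hq hσ
  have hsplit : ∀ t ∈ Ioo (0 : ℝ) 1, (p + 1 - betaDrift q σ r t - s * t) * betaKernel p q σ r s t =
      (p + 1) * betaKernel p q σ r s t - betaDrift q σ r t * betaKernel p q σ r s t -
        s * betaKernel (p + 1) q σ r s t := fun t ht => by
    rw [betaKernel_add_one ht.1]; ring
  have hint₁ : IntegrableOn (fun t => (p + 1) * betaKernel p q σ r s t -
      betaDrift q σ r t * betaKernel p q σ r s t) (Ioo 0 1) := (hk.const_mul _).sub hφk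
  have hint : IntegrableOn (fun t => (p + 1) * betaKernel p q σ r s t -
      betaDrift q σ r t * betaKernel p q σ r s t - s * betaKernel (p + 1) q σ r s t) (Ioo 0 1) :=
    hint₁.sub (hk1.const_mul s)
  have hFTC := intervalIntegral.integral_eq_sub_of_hasDerivAt_of_le zero_le_one
    (continuousOn_betaKernel (by linarith) hq.le hσ) (fun t ht => hasDerivAt_betaKernel hσ ht)
    ((intervalIntegrable_iff_integrableOn_Ioo_of_le zero_le_one).2
      (IntegrableOn.congr_fun hint (fun t ht => (hsplit t ht).symm) measurableSet_Ioo))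
  rw [intervalIntegral.integral_of_le zero_le_one, integral_Ioc_eq_integral_Ioo,
    setIntegral_congr_fun measurableSet_Ioo hsplit, integral_sub hint₁ (hk1.const_mul s),
    integral_sub (hk.const_mul _) hφk, integral_const_mul, integral_const_mul] at hFTC
  have hF0 : betaKernel (p + 1) q σ r s 0 = 0 := by
    simp [betaKernel, zero_rpow (by linarith : p + 1 ≠ 0)]
  have hF1 : betaKernel (p + 1) q σ r s 1 = 0 := by simp [betaKernel, zero_rpow hq.ne']
  rw [hF0, hF1] at hFTC
  unfold betaLaplace
  linarith

theorem betaDrift_nonneg (hq : 0 ≤ q) (hσ0 : 0 ≤ σ) (hσ1 : σ < 1) (hr : 0 ≤ r)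
    (ht : t ∈ Ioo 0 1) : 0 ≤ betaDrift q σ r t := by
  have := sub_pos.2 ht.2
  have := one_sub_mul_pos_of_mem_Icc hσ1 (Ioo_subset_Icc_self ht)
  have := ht.1
  unfold betaDrift
  positivity

theorem betaDrift_monotoneOn (hq : 0 ≤ q) (hσ0 : 0 ≤ σ) (hσ1 : σ < 1) (hr : 0 ≤ r) :
    MonotoneOn (betaDrift q σ r) (Ioo 0 1) := by
  intro x hx y hy hxy
  have := sub_pos.2 hx.2
  have := sub_pos.2 hy.2
  have := one_sub_mul_pos_of_mem_Icc hσ1 (Ioo_subset_Icc_self hx)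
  have := one_sub_mul_pos_of_mem_Icc hσ1 (Ioo_subset_Icc_self hy)
  have hψ : q / (1 - x) + r * σ / (1 - σ * x) ≤ q / (1 - y) + r * σ / (1 - σ * y) := by
    gcongr
  exact mul_le_mul hxy hψ (by positivity) hy.1.le

theorem betaLaplace_moment_inequality (hp : -1 < p) (hq : 0 < q) (hσ0 : 0 ≤ σ) (hσ1 : σ < 1)
    (hr : 0 ≤ r) :
    s * (2 * betaLaplace (p + 1 + 1) q σ r s * betaLaplace p q σ r s -
        betaLaplace (p + 1) q σ r s * betaLaplace (p + 1) q σ r s) ≤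
      (p + 3) * (betaLaplace p q σ r s * betaLaplace (p + 1) q σ r s) := by
  have hk : IntegrableOn (betaKernel p q σ r s) (Ioo 0 1) :=
    integrableOn_betaKernel hp (by linarith) hσ1
  have htk : IntegrableOn (fun t => t * betaKernel p q σ r s t) (Ioo 0 1) :=
    (integrableOn_betaKernel (by linarith) (by linarith) hσ1).congr_fun
      (fun t ht => betaKernel_add_one ht.1) measurableSet_Ioo
  have hφk := integrableOn_betaDrift_mul_betaKernel (r := r) (s := s) hp hq hσ1
  have hφtk : IntegrableOn (fun t => betaDrift q σ r t * (t * betaKernel p q σ r s t)) (Ioo 0 1) :=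
    IntegrableOn.congr_fun
      (integrableOn_betaDrift_mul_betaKernel (p := p + 1) (r := r) (s := s) (by linarith) hq hσ1)
      (fun t ht => by simp only [betaKernel_add_one ht.1]) measurableSet_Ioo
  have hcorr := integral_mul_integral_le_two_mul measurableSet_Ioo (fun t ht => ht.1.le)
    hk htk hφk hφtk (fun t ht => (betaKernel_pos hσ1 ht).le)
    (fun t => betaDrift_nonneg hq.le hσ0 hσ1 hr) (betaDrift_monotoneOn hq.le hσ0 hσ1 hr)
  have hM₁ : ∫ t in Ioo 0 1, t * betaKernel p q σ r s t = betaLaplace (p + 1) q σ r s :=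
    setIntegral_congr_fun measurableSet_Ioo fun t ht => (betaKernel_add_one ht.1).symm
  have hD : ∫ t in Ioo 0 1, betaDrift q σ r t * (t * betaKernel p q σ r s t) =
      ∫ t in Ioo 0 1, betaDrift q σ r t * betaKernel (p + 1) q σ r s t :=
    setIntegral_congr_fun measurableSet_Ioo fun t ht => by rw [betaKernel_add_one ht.1]
  rw [hM₁, hD] at hcorr
  have h₀ := betaLaplace_integration_by_parts (r := r) (s := s) hp hq hσ1
  have h₁ := betaLaplace_integration_by_parts (r := r) (s := s) (by linarith : -1 < p + 1) hq hσ1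
  unfold betaLaplace at h₀ h₁ hcorr ⊢
  linear_combination (2 * ∫ t in Ioo 0 1, betaKernel p q σ r s t) * h₁ -
    (∫ t in Ioo 0 1, betaKernel (p + 1) q σ r s t) * h₀ + hcorr

end

theorem stmt18 (α β σ γ : ℝ) (hα : 0 < α) (hβ : 1 < β)
    (hσ0 : 0 < σ) (hσ1 : σ < 1) (hγ : γ < 0)
    (G : ℝ → ℝ)
    (hG : ∀ s : ℝ, G s = ∫ t in Set.Ioo (0 : ℝ) 1,
      t ^ (α - 1) * (1 - t) ^ (β - 1) * (1 - σ * t) ^ (-γ) * Real.exp (-s * t)) :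
    (∀ s > (0 : ℝ), DifferentiableAt ℝ G s ∧ DifferentiableAt ℝ (deriv G) s) ∧
    (∀ s > (0 : ℝ), 0 < G s ∧ deriv G s < 0) ∧
    (∀ s > (0 : ℝ),
      s * (deriv G s / G s - 2 * deriv (deriv G) s / deriv G s) ≤ α + 2) ∧
    (∀ k : ℕ, α + 2 ≤ k → ∀ s > (0 : ℝ),
      deriv G s / G s - 2 * deriv (deriv G) s / deriv G s ≤ k / s) := by
  have hp : -1 < α - 1 := by linarith
  have hq : 0 < β - 1 := by linarith
  have hM : ∀ p s, -1 < p → 0 < betaLaplace p (β - 1) σ (-γ) s :=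
    fun p s hp => betaLaplace_pos hp (by linarith) hσ1
  have hGL : G = betaLaplace (α - 1) (β - 1) σ (-γ) := funext hG
  have hG' : deriv G = fun s => -betaLaplace (α - 1 + 1) (β - 1) σ (-γ) s := by
    rw [hGL, deriv_betaLaplace hp (by linarith) hσ1]
  have hG'' : deriv (deriv G) = betaLaplace (α - 1 + 1 + 1) (β - 1) σ (-γ) := by
    rw [hG', deriv.fun_neg', deriv_betaLaplace (by linarith) (by linarith) hσ1]
    simp only [neg_neg]
  have hbound : ∀ s, s * (deriv G s / G s - 2 * deriv (deriv G) s / deriv G s) ≤ α + 2 := by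
    intro s
    have h₀ := hM (α - 1) s hp
    have h₁ := hM (α - 1 + 1) s (by linarith)
    have := betaLaplace_moment_inequality (r := -γ) (s := s) hp hq hσ0.le hσ1 (by linarith)
    rw [hG'', hG', hGL, div_neg, sub_neg_eq_add, neg_div, neg_add_eq_sub,
      div_sub_div _ _ h₁.ne' h₀.ne', mul_div_assoc', div_le_iff₀ (mul_pos h₁ h₀)]
    linarith
  refine ⟨fun s _ => ⟨?_, ?_⟩, fun s _ => ⟨?_, ?_⟩, fun s _ => hbound s, fun k hk s hs => ?_⟩
  · rw [hGL]
    exact (hasDerivAt_betaLaplace hp (by linarith) hσ1).differentiableAt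
  · rw [hG']
    exact (hasDerivAt_betaLaplace (by linarith) (by linarith) hσ1).neg.differentiableAt
  · exact hGL ▸ hM _ s hp
  · simpa [hG'] using hM _ s (by linarith)
  · rw [le_div_iff₀ hs, mul_comm]
    exact (hbound s).trans hk
end
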